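/- Let l and m be positive integers, p > 0 with m > p + 1 + 2l, let f: ℝ → ℝ satisfy hypothesis H(m) with x ↦ x·f(x) absolutely integrable, let θ ∈ {e,o}, and let k be a nonnegative integer with k + 2 ≤ 2l. Then the planar vector field V(x,σ) = ( -∂^{k+1}Ψ_p^θ/∂x^k∂σ (x,σ), ∂^{k+1}Ψ_p^θ/∂x^{k+1} (x,σ) ) is globally Lipschitz and complete: for every (x₀,σ₀) ∈ ℝ² there exists a curve γ: ℝ → ℝ² with γ(0) = (x₀,σ₀) and γ'(t) = V(γ(t)) for every t ∈ ℝ (every trajectory of V extends to all of ℝ). -/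

import Mathlib

open MeasureTheory Filter

/-- Even kernel `Λ_p^e`. -/
noncomputable def LamE (p : ℝ) (z : ℝ) : ℝ :=
  (1 / Real.sqrt (2 * Real.pi)) *
    ∑' n : ℕ, (-1 : ℝ) ^ n * (∏ k ∈ Finset.range n, (p + 2 * (k : ℝ) + 1)) *
      z ^ (2 * n) / (Nat.factorial (2 * n) : ℝ)

/-- Odd kernel `Λ_p^o`. -/
noncomputable def LamO (p : ℝ) (z : ℝ) : ℝ :=
  (1 / Real.sqrt (2 * Real.pi)) *
    ∑' n : ℕ, (-1 : ℝ) ^ n * (∏ k ∈ Finset.range (n + 1), (p + 2 * (k : ℝ))) *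
      z ^ (2 * n + 1) / (Nat.factorial (2 * n + 1) : ℝ)

/-- Fourier transform of a real-valued integrable function. -/
noncomputable def FT (g : ℝ → ℝ) (ω : ℝ) : ℂ :=
  ∫ x : ℝ, (g x : ℂ) * Complex.exp (-(Complex.I * ω * x))

/-- Parity index. -/
inductive Theta | e | o

/-- The kernel of parity `θ`. -/
noncomputable def Lam : Theta → ℝ → ℝ → ℝ
  | Theta.e => LamE
  | Theta.o => LamO

/-- The convolution `φ_p^θ(x,ρ)`. -/
noncomputable def phi (f : ℝ → ℝ) (θ : Theta) (p x ρ : ℝ) : ℝ :=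
  ∫ ν : ℝ, f (x - ν) * ρ ^ (p + 1) * Lam θ p (ν * ρ)

/-- The multiplier `M_p^θ(ω)`. -/
noncomputable def Mker (θ : Theta) (c d p : ℝ) (ω : ℝ) : ℂ :=
  match θ with
  | Theta.e => ((c * |ω| ^ p : ℝ) : ℂ)
  | Theta.o => Complex.I * (d : ℂ) * ((Real.sign ω : ℝ) : ℂ) * ((|ω| ^ p : ℝ) : ℂ)

/-- Hypothesis H(m). -/
def HypH (m : ℕ) (f : ℝ → ℝ) : Prop :=
  ContDiff ℝ m f ∧ ∀ i : ℕ, i ≤ m → MeasureTheory.Integrable (iteratedDeriv i f)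

/-- Fourier transform of a complex-valued function. -/
noncomputable def FTc (g : ℝ → ℂ) (ω : ℝ) : ℂ :=
  ∫ x : ℝ, g x * Complex.exp (-(Complex.I * ω * x))

/-- The limit `f_p^θ(x)`. -/
noncomputable def flim (f : ℝ → ℝ) (θ : Theta) (c d p : ℝ) (x : ℝ) : ℝ :=
  (((1 / (2 * Real.pi) : ℝ) : ℂ) *
    ∫ ω : ℝ, FT f ω * Mker θ c d p ω * Complex.exp (Complex.I * ω * x)).re

/-- The scale-space function `Ψ_p^θ(x,σ)`. -/
noncomputable def Psi (f : ℝ → ℝ) (θ : Theta) (c d p : ℝ) (x σ : ℝ) : ℝ :=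
  (((1 / (2 * Real.pi) : ℝ) : ℂ) *
    ∫ ω : ℝ, FT f ω * Mker θ c d p ω * ((Real.exp (-(ω ^ 2 * σ ^ 2) / 2) : ℝ) : ℂ) *
      Complex.exp (Complex.I * ω * x)).re

/-!
Both components of the field are real parts of integrals `∫ g(ω) (iω)^j a(ω,σ) e^{iωx} dω` with
`g = 𝓕f · M_p^θ` and `a(ω,σ)` either `e^{-ω²σ²/2}` or its `σ`-derivative. Such a factor is bounded
by `|ω|^i` and `|ω|^(i+1)`-Lipschitz in `σ` (`i = 0, 1`), so the integral is Lipschitz in `(x,σ)`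
once `‖g(ω)‖ |ω|^(k+2)` is integrable; this follows from the decay `|𝓕f(ω)| ≲ (1+|ω|)^(-m)` given
by H(m) and `|M_p^θ(ω)| ≲ |ω|^p`, because `m - p - (k+2) > 1`. Differentiation under the integral
sign identifies the derivatives of `Ψ` with these integrals. A globally `K`-Lipschitz field has
local solutions on every interval of length `1/(K+1)` (Picard–Lindelöf), and these glue to a
solution on all of `ℝ`.
-/

open Set
open scoped FourierTransform

section GlobalFlow

variable {E : Type*} [NormedAddCommGroup E] [NormedSpace ℝ E] {V : E → E} {K : NNReal}

theorem exists_isIntegralCurveOn_Icc_of_lipschitzWith [CompleteSpace E] (hV : LipschitzWith K V)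
    {a b t₀ : ℝ} (ht₀ : t₀ ∈ Icc a b) (hab : (K + 1) * (b - a) ≤ 1) (x₀ : E) :
    ∃ γ : ℝ → E, γ t₀ = x₀ ∧ IsIntegralCurveOn γ (fun _ ↦ V) (Icc a b) := by
  -- On the ball of radius `R = ‖V x₀‖` the field is bounded by `(K + 1) R`, so on an interval of
  -- length `1 / (K + 1)` a solution cannot leave that ball.
  set R : NNReal := ‖V x₀‖₊
  have hbound : ∀ x ∈ Metric.closedBall x₀ R, ‖V x‖ ≤ ((K + 1) * R : NNReal) := by
    intro x hx
    calc ‖V x‖ ≤ ‖V x₀‖ + ‖V x - V x₀‖ := norm_le_insert' _ _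
      _ ≤ R + K * R := by
          gcongr
          · exact le_rfl
          · exact (hV.norm_sub_le x x₀).trans (by gcongr; exact mem_closedBall_iff_norm.1 hx)
      _ = ((K + 1) * R : NNReal) := by push_cast; ring
  have hPL : IsPicardLindelof (fun _ ↦ V) (⟨t₀, ht₀⟩ : Icc a b) x₀ R 0 ((K + 1) * R) K := by
    refine IsPicardLindelof.of_time_independent hbound hV.lipschitzOnWith ?_
    have hmax : max (b - t₀) (t₀ - a) ≤ b - a := max_le (by linarith [ht₀.1]) (by linarith [ht₀.2])
    calc ((K + 1) * R : NNReal) * max (b - t₀) (t₀ - a) ≤ R * ((K + 1) * (b - a)) := by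
          push_cast
          nlinarith [mul_le_mul_of_nonneg_left hmax (by positivity : (0 : ℝ) ≤ (K + 1) * R)]
      _ ≤ R - (0 : NNReal) := by simpa using mul_le_mul_of_nonneg_left hab R.coe_nonneg
  exact hPL.exists_eq_forall_mem_Icc_hasDerivWithinAt₀

theorem IsIntegralCurveOn.hasDerivWithinAt_of_eqOn {γ u : ℝ → E} {v : ℝ → E → E} {s : Set ℝ}
    (hu : IsIntegralCurveOn u v s) (hs : IsClosed s) (hγu : EqOn γ u s) (t : ℝ) :
    HasDerivWithinAt γ (v t (γ t)) s t := by
  by_cases ht : t ∈ s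
  · rw [hγu ht]
    exact (hu t ht).congr hγu (hγu ht)
  · rw [← hs.closure_eq] at ht
    exact hasDerivWithinAt_iff_hasFDerivWithinAt.2 (.of_notMem_closure ht)

theorem IsIntegralCurveOn.exists_glue {γ₁ γ₂ : ℝ → E} {v : ℝ → E → E} {a b c : ℝ}
    (h₁ : IsIntegralCurveOn γ₁ v (Icc a b)) (h₂ : IsIntegralCurveOn γ₂ v (Icc b c))
    (hab : a ≤ b) (hbc : b ≤ c) (hb : γ₁ b = γ₂ b) :
    ∃ γ : ℝ → E, EqOn γ γ₁ (Icc a b) ∧ EqOn γ γ₂ (Icc b c) ∧ IsIntegralCurveOn γ v (Icc a c) := by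
  let γ : ℝ → E := fun t ↦ if t ≤ b then γ₁ t else γ₂ t
  have e₁ : EqOn γ γ₁ (Icc a b) := fun t ht ↦ if_pos ht.2
  have e₂ : EqOn γ γ₂ (Icc b c) := by
    intro t ht
    rcases ht.1.eq_or_lt with rfl | hlt
    · simp [γ, hb]
    · simp [γ, not_le.2 hlt]
  refine ⟨γ, e₁, e₂, fun t _ ↦ ?_⟩
  rw [← Icc_union_Icc_eq_Icc hab hbc]
  exact (h₁.hasDerivWithinAt_of_eqOn isClosed_Icc e₁ t).union
    (h₂.hasDerivWithinAt_of_eqOn isClosed_Icc e₂ t)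

theorem exists_isIntegralCurveOn_Icc_natCast_div_of_lipschitzWith [CompleteSpace E]
    (hV : LipschitzWith K V) (x₀ : E) (n : ℕ) :
    ∃ γ : ℝ → E, γ 0 = x₀ ∧
      IsIntegralCurveOn γ (fun _ ↦ V) (Icc (-(n / (K + 1))) (n / (K + 1))) := by
  induction n with
  | zero =>
    simpa using exists_isIntegralCurveOn_Icc_of_lipschitzWith hV (left_mem_Icc.2 le_rfl)
      (by simp) x₀
  | succ n ih =>
    obtain ⟨γ, hγ₀, hγ⟩ := ih
    set T : ℝ := n / (K + 1)
    have hT : 0 ≤ T := by positivity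
    have hε : 0 < 1 / ((K : ℝ) + 1) := by positivity
    have hT' : ((n + 1 : ℕ) : ℝ) / (K + 1) = T + 1 / (K + 1) := by push_cast; ring
    have hstep : (K + 1) * (T + 1 / (K + 1) - T) ≤ 1 := by field_simp; linarith
    obtain ⟨γr, hγr₀, hγr⟩ := exists_isIntegralCurveOn_Icc_of_lipschitzWith hV
      (left_mem_Icc.2 (by linarith : T ≤ T + 1 / (K + 1))) hstep (γ T)
    obtain ⟨γl, hγl₀, hγl⟩ := exists_isIntegralCurveOn_Icc_of_lipschitzWith hV
      (right_mem_Icc.2 (by linarith : -(T + 1 / (K + 1)) ≤ -T)) (by linarith) (γ (-T))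
    obtain ⟨γ', e', -, hγ'⟩ := hγ.exists_glue hγr (by linarith) (by linarith) hγr₀.symm
    obtain ⟨γ'', -, e'', hγ''⟩ := hγl.exists_glue hγ' (by linarith) (by linarith)
      (by rw [hγl₀, e' (left_mem_Icc.2 (by linarith))])
    refine ⟨γ'', ?_, by rwa [hT']⟩
    rw [e'' ⟨by linarith, by linarith⟩, e' ⟨by linarith, hT⟩, hγ₀]

theorem exists_isIntegralCurve_of_lipschitzWith [CompleteSpace E] (hV : LipschitzWith K V)
    (x₀ : E) : ∃ γ : ℝ → E, γ 0 = x₀ ∧ IsIntegralCurve γ (fun _ ↦ V) := by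
  have hlocal : ∀ T : ℝ, ∃ γ : ℝ → E, γ 0 = x₀ ∧ ∀ t ∈ Ioo (-T) T, HasDerivAt γ (V (γ t)) t := by
    intro T
    set n := ⌈T * (K + 1)⌉₊
    obtain ⟨γ, hγ₀, hγ⟩ := exists_isIntegralCurveOn_Icc_natCast_div_of_lipschitzWith hV x₀ n
    have hTn : T ≤ n / (K + 1) := by
      rw [le_div_iff₀ (by positivity)]
      exact Nat.le_ceil _
    refine ⟨γ, hγ₀, fun t ht ↦ ?_⟩
    have ht' : t ∈ Ioo (-(n / (K + 1) : ℝ)) (n / (K + 1)) :=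
      ⟨by linarith [ht.1], by linarith [ht.2]⟩
    exact (hγ t (Ioo_subset_Icc_self ht')).hasDerivAt (Icc_mem_nhds ht'.1 ht'.2)
  choose Γ hΓ₀ hΓ using hlocal
  have hagree : ∀ {T T' t : ℝ}, |t| < T → |t| < T' → Γ T t = Γ T' t := by
    intro T T' t hT hT'
    have ht : t ∈ Ioo (-min T T') (min T T') := abs_lt.1 (lt_min hT hT')
    have hpos : 0 < min T T' := (abs_nonneg t).trans_lt (lt_min hT hT')
    have hT_le := min_le_left T T'
    have hT'_le := min_le_right T T'
    exact ODE_solution_unique_of_mem_Ioo (v := fun _ ↦ V) (s := fun _ ↦ univ)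
      (fun _ _ ↦ hV.lipschitzOnWith) ⟨neg_lt_zero.2 hpos, hpos⟩
      (fun s hs ↦ ⟨hΓ T s ⟨by linarith [hs.1], by linarith [hs.2]⟩, mem_univ _⟩)
      (fun s hs ↦ ⟨hΓ T' s ⟨by linarith [hs.1], by linarith [hs.2]⟩, mem_univ _⟩)
      (by rw [hΓ₀, hΓ₀]) ht
  refine ⟨fun t ↦ Γ (|t| + 1) t, hΓ₀ _, fun t ↦ ?_⟩
  have ht : t ∈ Ioo (-(|t| + 1)) (|t| + 1) := abs_lt.1 (lt_add_one _)
  refine (hΓ _ t ht).congr_of_eventuallyEq ?_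
  filter_upwards [Ioo_mem_nhds ht.1 ht.2] with s hs
  exact hagree (lt_add_one _) (abs_lt.2 hs)

end GlobalFlow

theorem iteratedDeriv_eq_of_hasDerivAt {E : Type*} [NormedAddCommGroup E] [NormedSpace ℝ E]
    {F : ℕ → ℝ → E} {j : ℕ} (hF : ∀ n < j, ∀ y, HasDerivAt (F n) (F (n + 1) y) y) :
    iteratedDeriv j (F 0) = F j := by
  induction j with
  | zero => exact iteratedDeriv_zero
  | succ j ih =>
    rw [iteratedDeriv_succ, ih fun n hn ↦ hF n (by omega)]
    exact funext fun y ↦ (hF j (by omega) y).deriv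

theorem iteratedDeriv_ofReal_comp {f : ℝ → ℝ} {m n : ℕ} (hf : ContDiff ℝ m f) (hn : n ≤ m) :
    iteratedDeriv n (fun x ↦ (f x : ℂ)) = fun x ↦ ((iteratedDeriv n f x : ℝ) : ℂ) := by
  have h := iteratedDeriv_eq_of_hasDerivAt (j := n) (F := fun k x ↦ ((iteratedDeriv k f x : ℝ) : ℂ))
    fun k hk y ↦ by
      have hd := (hf.differentiable_iteratedDeriv k (by exact_mod_cast hk.trans_le hn)) y
      rw [iteratedDeriv_succ]
      exact hd.hasDerivAt.ofReal_comp
  simpa only [iteratedDeriv_zero] using h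

theorem HasDerivAt.re_const_mul {F : ℝ → ℂ} {F' : ℂ} {x : ℝ} (hF : HasDerivAt F F' x) (c : ℂ) :
    HasDerivAt (fun y ↦ (c * F y).re) (c * F').re x :=
  Complex.reCLM.hasFDerivAt.comp_hasDerivAt x (hF.const_mul c)

theorem LipschitzWith.re_const_mul {P : Type*} [PseudoMetricSpace P] {F : P → ℂ} {K : NNReal}
    (hF : LipschitzWith K F) (c : ℂ) : LipschitzWith (‖c‖₊ * K) (fun q ↦ (c * F q).re) := by
  refine LipschitzWith.of_dist_le_mul fun q q' ↦ ?_
  calc dist (c * F q).re (c * F q').re = |(c * (F q - F q')).re| := by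
        rw [Real.dist_eq, mul_sub, Complex.sub_re]
    _ ≤ ‖c‖ * ‖F q - F q'‖ := (Complex.abs_re_le_norm _).trans_eq (norm_mul _ _)
    _ ≤ ‖c‖ * (K * dist q q') := by gcongr; rw [← dist_eq_norm]; exact hF.dist_le_mul q q'
    _ = (‖c‖₊ * K : NNReal) * dist q q' := by push_cast; ring

theorem abs_sub_le_of_hasDerivAt {u u' : ℝ → ℝ} {C : ℝ} (hu : ∀ s, HasDerivAt u (u' s) s)
    (hC : ∀ s, |u' s| ≤ C) (s s' : ℝ) : |u s - u s'| ≤ C * |s - s'| :=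
  convex_univ.norm_image_sub_le_of_norm_hasDerivWithin_le (fun s _ ↦ (hu s).hasDerivWithinAt)
    (fun s _ ↦ hC s) (mem_univ s') (mem_univ s)

theorem norm_cexp_I_mul_ofReal_mul (ω x : ℝ) : ‖Complex.exp (Complex.I * ω * x)‖ = 1 := by
  rw [Complex.norm_exp]; simp

theorem norm_cexp_I_mul_sub_cexp_I_mul_le (ω x x' : ℝ) :
    ‖Complex.exp (Complex.I * ω * x) - Complex.exp (Complex.I * ω * x')‖ ≤ |ω| * |x - x'| := by
  have h : Complex.exp (Complex.I * ω * x) - Complex.exp (Complex.I * ω * x')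
      = Complex.exp (Complex.I * ω * x') * (Complex.exp (Complex.I * ↑(ω * (x - x'))) - 1) := by
    rw [mul_sub, mul_one, ← Complex.exp_add]; push_cast; ring_nf
  rw [h, norm_mul, norm_cexp_I_mul_ofReal_mul, one_mul, ← abs_mul]
  exact Real.norm_exp_I_mul_ofReal_sub_one_le

theorem hasDerivAt_integral_of_norm_deriv_le {α E : Type*} [MeasurableSpace α] {μ : Measure α}
    [NormedAddCommGroup E] [NormedSpace ℝ E] {F F' : ℝ → α → E} {bound : α → ℝ} {x₀ : ℝ}
    (hF : ∀ x, Integrable (F x) μ) (hF' : Integrable (F' x₀) μ)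
    (h_le : ∀ x ω, ‖F' x ω‖ ≤ bound ω) (hbound : Integrable bound μ)
    (h_diff : ∀ x ω, HasDerivAt (F · ω) (F' x ω) x) :
    HasDerivAt (fun x ↦ ∫ ω, F x ω ∂μ) (∫ ω, F' x₀ ω ∂μ) x₀ :=
  (hasDerivAt_integral_of_dominated_loc_of_deriv_le univ_mem
    (.of_forall fun x ↦ (hF x).aestronglyMeasurable) (hF x₀) hF'.aestronglyMeasurable
    (.of_forall fun ω x _ ↦ h_le x ω) hbound (.of_forall fun ω x _ ↦ h_diff x ω)).2

theorem lipschitzWith_integral_of_norm_sub_le {α P E : Type*} [MeasurableSpace α]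
    {μ : Measure α} [PseudoMetricSpace P] [NormedAddCommGroup E] [NormedSpace ℝ E]
    {F : P → α → E} {w : α → ℝ} (hF : ∀ q, Integrable (F q) μ) (hw : Integrable w μ)
    (hFw : ∀ q q' ω, ‖F q ω - F q' ω‖ ≤ w ω * dist q q') :
    LipschitzWith (∫ ω, w ω ∂μ).toNNReal (fun q ↦ ∫ ω, F q ω ∂μ) := by
  refine LipschitzWith.of_dist_le_mul fun q q' ↦ ?_
  rw [dist_eq_norm, ← integral_sub (hF q) (hF q')]
  calc ‖∫ ω, F q ω - F q' ω ∂μ‖ ≤ ∫ ω, w ω * dist q q' ∂μ :=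
        norm_integral_le_of_norm_le (hw.mul_const _) (.of_forall fun ω ↦ hFw q q' ω)
    _ = (∫ ω, w ω ∂μ) * dist q q' := integral_mul_const _ _
    _ ≤ _ := by gcongr; exact Real.le_coe_toNNReal _

theorem abs_le_exp_sq_div_two (u : ℝ) : |u| ≤ Real.exp (u ^ 2 / 2) := by
  nlinarith [Real.add_one_le_exp (u ^ 2 / 2), sq_nonneg (|u| - 1), sq_abs u, abs_nonneg u]

theorem abs_sq_sub_one_le_exp_sq_div_two (u : ℝ) : |u ^ 2 - 1| ≤ Real.exp (u ^ 2 / 2) := by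
  have h : (u ^ 2 / 4 + 1) ^ 2 ≤ Real.exp (u ^ 2 / 2) := by
    rw [show u ^ 2 / 2 = u ^ 2 / 4 * 2 by ring, Real.exp_mul, Real.rpow_two]
    gcongr
    exact Real.add_one_le_exp _
  rw [abs_le]
  constructor <;> nlinarith [sq_nonneg (u ^ 2 / 4 - 1), sq_nonneg u]

theorem abs_mul_exp_neg_le_one {u v : ℝ} (h : |u| ≤ Real.exp (v / 2)) :
    |u| * Real.exp (-v / 2) ≤ 1 := by
  calc |u| * Real.exp (-v / 2) ≤ Real.exp (v / 2) * Real.exp (-v / 2) := by gcongr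
    _ = 1 := by rw [← Real.exp_add, neg_div, add_neg_cancel, Real.exp_zero]

noncomputable def gaussFactor (ω σ : ℝ) : ℝ := Real.exp (-(ω ^ 2 * σ ^ 2) / 2)

noncomputable def gaussFactorDeriv (ω σ : ℝ) : ℝ := -(ω ^ 2 * σ) * gaussFactor ω σ

theorem hasDerivAt_gaussFactor (ω σ : ℝ) :
    HasDerivAt (gaussFactor ω) (gaussFactorDeriv ω σ) σ := by
  have h : HasDerivAt (fun s ↦ -(ω ^ 2 * s ^ 2) / 2) (-(ω ^ 2 * σ)) σ :=
    (((hasDerivAt_pow 2 σ).const_mul (ω ^ 2)).fun_neg.div_const 2).congr_deriv (by norm_num; ring)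
  rw [gaussFactorDeriv, mul_comm]
  exact h.exp

theorem hasDerivAt_gaussFactorDeriv (ω σ : ℝ) :
    HasDerivAt (gaussFactorDeriv ω) (ω ^ 2 * (((ω * σ) ^ 2 - 1) * gaussFactor ω σ)) σ :=
  (((hasDerivAt_id σ).const_mul (ω ^ 2)).fun_neg.mul (hasDerivAt_gaussFactor ω σ)).congr_deriv
    (by simp only [gaussFactorDeriv, id]; ring)

theorem gaussFactor_eq (ω σ : ℝ) : gaussFactor ω σ = Real.exp (-(ω * σ) ^ 2 / 2) := by
  rw [gaussFactor, mul_pow]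

theorem abs_gaussFactor_le (ω σ : ℝ) : |gaussFactor ω σ| ≤ 1 := by
  rw [gaussFactor, abs_of_pos (Real.exp_pos _), Real.exp_le_one_iff]
  have := mul_nonneg (sq_nonneg ω) (sq_nonneg σ)
  linarith

theorem abs_gaussFactorDeriv_le (ω σ : ℝ) : |gaussFactorDeriv ω σ| ≤ |ω| := by
  have h := abs_mul_exp_neg_le_one (abs_le_exp_sq_div_two (ω * σ))
  rw [gaussFactorDeriv, gaussFactor_eq, abs_mul, abs_of_pos (Real.exp_pos _)]
  calc |-(ω ^ 2 * σ)| * Real.exp (-(ω * σ) ^ 2 / 2)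
      = |ω| * (|ω * σ| * Real.exp (-(ω * σ) ^ 2 / 2)) := by
        rw [abs_neg, abs_mul, abs_mul, abs_pow, sq]; ring
    _ ≤ |ω| * 1 := by gcongr
    _ = |ω| := mul_one _

theorem abs_deriv_gaussFactorDeriv_le (ω σ : ℝ) :
    |ω ^ 2 * (((ω * σ) ^ 2 - 1) * gaussFactor ω σ)| ≤ |ω| ^ 2 := by
  have h := abs_mul_exp_neg_le_one (abs_sq_sub_one_le_exp_sq_div_two (ω * σ))
  rw [gaussFactor_eq, abs_mul, abs_mul, abs_of_pos (Real.exp_pos _), abs_pow]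
  calc |ω| ^ 2 * (|(ω * σ) ^ 2 - 1| * Real.exp (-(ω * σ) ^ 2 / 2)) ≤ |ω| ^ 2 * 1 := by gcongr
    _ = |ω| ^ 2 := mul_one _

structure IsDampingFactor (a : ℝ → ℝ → ℝ) (i : ℕ) : Prop where
  continuous : ∀ σ, Continuous (a · σ)
  abs_le : ∀ ω σ, |a ω σ| ≤ |ω| ^ i
  abs_sub_le : ∀ ω σ σ', |a ω σ - a ω σ'| ≤ |ω| ^ (i + 1) * |σ - σ'|

theorem isDampingFactor_gaussFactor : IsDampingFactor gaussFactor 0 where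
  continuous σ := by unfold gaussFactor; fun_prop
  abs_le ω σ := by simpa using abs_gaussFactor_le ω σ
  abs_sub_le ω := by
    simpa using abs_sub_le_of_hasDerivAt (hasDerivAt_gaussFactor ω) (abs_gaussFactorDeriv_le ω)

theorem isDampingFactor_gaussFactorDeriv : IsDampingFactor gaussFactorDeriv 1 where
  continuous σ := by unfold gaussFactorDeriv gaussFactor; fun_prop
  abs_le ω σ := by simpa using abs_gaussFactorDeriv_le ω σ
  abs_sub_le ω :=
    abs_sub_le_of_hasDerivAt (hasDerivAt_gaussFactorDeriv ω) (abs_deriv_gaussFactorDeriv_le ω)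

def IntegrableMoments (g : ℝ → ℂ) (N : ℕ) : Prop :=
  AEStronglyMeasurable g ∧ ∀ n ≤ N, Integrable (fun ω ↦ ‖g ω‖ * |ω| ^ n)

noncomputable def dampedFourierIntegral (g : ℝ → ℂ) (a : ℝ → ℝ → ℝ) (j : ℕ) (x σ : ℝ) : ℂ :=
  ∫ ω, g ω * (Complex.I * ω) ^ j * (a ω σ : ℂ) * Complex.exp (Complex.I * ω * x)

theorem IntegrableMoments.mono {g : ℝ → ℂ} {M N : ℕ} (hg : IntegrableMoments g N) (hMN : M ≤ N) :
    IntegrableMoments g M :=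
  ⟨hg.1, fun n hn ↦ hg.2 n (hn.trans hMN)⟩

namespace IsDampingFactor

variable {g : ℝ → ℂ} {a a' : ℝ → ℝ → ℝ} {i j : ℕ}

theorem norm_integrand_le (ha : IsDampingFactor a i) (x σ ω : ℝ) :
    ‖g ω * (Complex.I * ω) ^ j * (a ω σ : ℂ) * Complex.exp (Complex.I * ω * x)‖
      ≤ ‖g ω‖ * |ω| ^ (j + i) := by
  simp only [norm_mul, norm_pow, Complex.norm_I, Complex.norm_real, Real.norm_eq_abs,
    norm_cexp_I_mul_ofReal_mul, one_mul, mul_one, pow_add, ← mul_assoc]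
  gcongr
  exact ha.abs_le ω σ

theorem integrable_integrand (ha : IsDampingFactor a i) (hg : IntegrableMoments g (j + i))
    (x σ : ℝ) : Integrable fun ω ↦
      g ω * (Complex.I * ω) ^ j * (a ω σ : ℂ) * Complex.exp (Complex.I * ω * x) := by
  refine (hg.2 _ le_rfl).mono' ?_ (.of_forall (ha.norm_integrand_le x σ))
  have hg := hg.1
  have ha := ha.continuous σ
  fun_prop

theorem hasDerivAt_dampedFourierIntegral_position (ha : IsDampingFactor a i)
    (hg : IntegrableMoments g (j + 1 + i)) (x σ : ℝ) :
    HasDerivAt (fun y ↦ dampedFourierIntegral g a j y σ)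
      (dampedFourierIntegral g a (j + 1) x σ) x := by
  unfold dampedFourierIntegral
  refine hasDerivAt_integral_of_norm_deriv_le
    (F := fun y ω ↦ g ω * (Complex.I * ω) ^ j * (a ω σ : ℂ) * Complex.exp (Complex.I * ω * y))
    (F' := fun y ω ↦ g ω * (Complex.I * ω) ^ (j + 1) * (a ω σ : ℂ) *
      Complex.exp (Complex.I * ω * y))
    (fun y ↦ ha.integrable_integrand (j := j) (hg.mono (by omega)) y σ)
    (ha.integrable_integrand hg x σ)
    (fun y ω ↦ ha.norm_integrand_le y σ ω) (hg.2 _ le_rfl) fun y ω ↦ ?_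
  have h := ((((hasDerivAt_id y).ofReal_comp).const_mul (Complex.I * ω)).cexp).const_mul
    (g ω * (Complex.I * ω) ^ j * (a ω σ : ℂ))
  exact h.congr_deriv (by simp only [id, Complex.ofReal_one]; ring)

theorem hasDerivAt_dampedFourierIntegral_scale (ha : IsDampingFactor a i)
    (ha' : IsDampingFactor a' (i + 1)) (hder : ∀ ω σ, HasDerivAt (a ω) (a' ω σ) σ)
    (hg : IntegrableMoments g (j + (i + 1))) (x σ : ℝ) :
    HasDerivAt (fun s ↦ dampedFourierIntegral g a j x s) (dampedFourierIntegral g a' j x σ) σ := by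
  unfold dampedFourierIntegral
  refine hasDerivAt_integral_of_norm_deriv_le
    (F := fun s ω ↦ g ω * (Complex.I * ω) ^ j * (a ω s : ℂ) * Complex.exp (Complex.I * ω * x))
    (F' := fun s ω ↦ g ω * (Complex.I * ω) ^ j * (a' ω s : ℂ) * Complex.exp (Complex.I * ω * x))
    (fun s ↦ ha.integrable_integrand (hg.mono (by omega)) x s) (ha'.integrable_integrand hg x σ)
    (fun s ω ↦ ha'.norm_integrand_le x s ω) (hg.2 _ le_rfl) fun s ω ↦ ?_
  exact ((hder ω s).ofReal_comp.const_mul _).mul_const _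

theorem norm_kernel_sub_le (ha : IsDampingFactor a i) (ω x σ x' σ' : ℝ) :
    ‖(a ω σ : ℂ) * Complex.exp (Complex.I * ω * x)
        - (a ω σ' : ℂ) * Complex.exp (Complex.I * ω * x')‖ ≤ |ω| ^ (i + 1) * (|σ - σ'| + |x - x'|) := by
  have hsplit : (a ω σ : ℂ) * Complex.exp (Complex.I * ω * x)
      - (a ω σ' : ℂ) * Complex.exp (Complex.I * ω * x')
      = ((a ω σ - a ω σ' : ℝ) : ℂ) * Complex.exp (Complex.I * ω * x)
        + (a ω σ' : ℂ) * (Complex.exp (Complex.I * ω * x) - Complex.exp (Complex.I * ω * x')) := by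
    push_cast; ring
  rw [hsplit]
  refine (norm_add_le _ _).trans ?_
  rw [norm_mul, norm_mul, norm_cexp_I_mul_ofReal_mul, mul_one, Complex.norm_real, Complex.norm_real,
    Real.norm_eq_abs, Real.norm_eq_abs]
  calc |a ω σ - a ω σ'| + |a ω σ'| * ‖Complex.exp (Complex.I * ω * x)
        - Complex.exp (Complex.I * ω * x')‖
      ≤ |ω| ^ (i + 1) * |σ - σ'| + |ω| ^ i * (|ω| * |x - x'|) := by
        gcongr
        exacts [ha.abs_sub_le ω σ σ', ha.abs_le ω σ', norm_cexp_I_mul_sub_cexp_I_mul_le ω x x']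
    _ = |ω| ^ (i + 1) * (|σ - σ'| + |x - x'|) := by ring

theorem lipschitzWith_dampedFourierIntegral (ha : IsDampingFactor a i)
    (hg : IntegrableMoments g (j + i + 1)) :
    LipschitzWith (∫ ω, 2 * (‖g ω‖ * |ω| ^ (j + i + 1))).toNNReal
      (fun q : ℝ × ℝ ↦ dampedFourierIntegral g a j q.1 q.2) := by
  refine lipschitzWith_integral_of_norm_sub_le
    (fun q ↦ ha.integrable_integrand (hg.mono (by omega)) q.1 q.2) ((hg.2 _ le_rfl).const_mul 2)
    fun q q' ω ↦ ?_
  have hx : |q.1 - q'.1| ≤ dist q q' := (le_max_left _ _ : _ ≤ max (dist q.1 q'.1) _)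
  have hσ : |q.2 - q'.2| ≤ dist q q' := (le_max_right _ _ : _ ≤ max _ (dist q.2 q'.2))
  calc ‖g ω * (Complex.I * ω) ^ j * (a ω q.2 : ℂ) * Complex.exp (Complex.I * ω * q.1)
        - g ω * (Complex.I * ω) ^ j * (a ω q'.2 : ℂ) * Complex.exp (Complex.I * ω * q'.1)‖
      = ‖g ω‖ * |ω| ^ j * ‖(a ω q.2 : ℂ) * Complex.exp (Complex.I * ω * q.1)
        - (a ω q'.2 : ℂ) * Complex.exp (Complex.I * ω * q'.1)‖ := by
        simp only [mul_assoc, ← mul_sub, norm_mul, norm_pow, Complex.norm_I, one_mul,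
          Complex.norm_real, Real.norm_eq_abs]
    _ ≤ ‖g ω‖ * |ω| ^ j * (|ω| ^ (i + 1) * (dist q q' + dist q q')) := by
        gcongr
        exact (ha.norm_kernel_sub_le ω _ _ _ _).trans (by gcongr)
    _ = 2 * (‖g ω‖ * |ω| ^ (j + i + 1)) * dist q q' := by ring

theorem iteratedDeriv_re_dampedFourierIntegral (ha : IsDampingFactor a i)
    (hg : IntegrableMoments g (j + i)) (c : ℂ) (σ : ℝ) :
    iteratedDeriv j (fun y ↦ (c * dampedFourierIntegral g a 0 y σ).re)
      = fun y ↦ (c * dampedFourierIntegral g a j y σ).re :=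
  iteratedDeriv_eq_of_hasDerivAt (F := fun n y ↦ (c * dampedFourierIntegral g a n y σ).re)
    fun n hn y ↦
      (ha.hasDerivAt_dampedFourierIntegral_position (hg.mono (by omega)) y σ).re_const_mul c

end IsDampingFactor

theorem FT_eq_fourier (h : ℝ → ℝ) (ω : ℝ) :
    FT h ω = 𝓕 (fun x ↦ (h x : ℂ)) (ω / (2 * Real.pi)) := by
  rw [Real.fourier_real_eq_integral_exp_smul, FT]
  congr 1 with x
  rw [smul_eq_mul, mul_comm]
  congr 2
  push_cast
  field_simp

theorem continuous_FT {h : ℝ → ℝ} (hh : Integrable h) : Continuous (FT h) := by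
  rw [funext (FT_eq_fourier h)]
  exact (VectorFourier.fourierIntegral_continuous Real.continuous_fourierChar continuous_inner
    hh.ofReal).comp (continuous_id.div_const _)

theorem norm_FT_le_integral_abs (h : ℝ → ℝ) (ω : ℝ) : ‖FT h ω‖ ≤ ∫ x, |h x| := by
  rw [FT_eq_fourier]
  exact (VectorFourier.norm_fourierIntegral_le_integral_norm _ _ _ _ _).trans_eq (by simp)

theorem FT_iteratedDeriv {m : ℕ} {f : ℝ → ℝ} (hf : HypH m f) (ω : ℝ) :
    FT (iteratedDeriv m f) ω = (Complex.I * ω) ^ m * FT f ω := by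
  have hfℂ : ContDiff ℝ m (fun x ↦ (f x : ℂ)) := Complex.ofRealCLM.contDiff.comp hf.1
  rw [FT_eq_fourier, FT_eq_fourier, ← iteratedDeriv_ofReal_comp hf.1 le_rfl,
    Real.fourier_iteratedDeriv hfℂ (fun n hn ↦ ?_) le_rfl]
  · simp only [smul_eq_mul]
    congr 2
    push_cast
    field_simp
  · have hn : n ≤ m := by exact_mod_cast hn
    rw [iteratedDeriv_ofReal_comp hf.1 hn]
    exact (hf.2 n hn).ofReal

theorem norm_FT_mul_pow_le {m : ℕ} {f : ℝ → ℝ} (hf : HypH m f) (ω : ℝ) :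
    ‖FT f ω‖ * |ω| ^ m ≤ ∫ x, |iteratedDeriv m f x| := by
  have h := norm_FT_le_integral_abs (iteratedDeriv m f) ω
  rwa [FT_iteratedDeriv hf, norm_mul, norm_pow, norm_mul, Complex.norm_I, one_mul,
    Complex.norm_real, Real.norm_eq_abs, mul_comm] at h

theorem norm_FT_le_mul_one_add_rpow_neg {m : ℕ} {f : ℝ → ℝ} (hf : HypH m f) :
    ∃ A, ∀ ω, ‖FT f ω‖ ≤ A * (1 + |ω|) ^ (-(m : ℝ)) := by
  refine ⟨2 ^ (m - 1) * ((∫ x, |f x|) + ∫ x, |iteratedDeriv m f x|), fun ω ↦ ?_⟩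
  rw [Real.rpow_neg (by positivity), Real.rpow_natCast, ← div_eq_mul_inv,
    le_div_iff₀ (by positivity)]
  calc ‖FT f ω‖ * (1 + |ω|) ^ m ≤ ‖FT f ω‖ * (2 ^ (m - 1) * (1 ^ m + |ω| ^ m)) := by
        gcongr; exact add_pow_le zero_le_one (abs_nonneg ω) m
    _ = 2 ^ (m - 1) * (‖FT f ω‖ + ‖FT f ω‖ * |ω| ^ m) := by ring
    _ ≤ _ := by gcongr; exacts [norm_FT_le_integral_abs f ω, norm_FT_mul_pow_le hf ω]

theorem Real.measurable_sign : Measurable Real.sign :=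
  Measurable.ite (measurableSet_lt measurable_id measurable_const) measurable_const
    (Measurable.ite (measurableSet_lt measurable_const measurable_id) measurable_const
      measurable_const)

theorem measurable_Mker (θ : Theta) (c d p : ℝ) : Measurable (Mker θ c d p) := by
  have := Real.measurable_sign
  cases θ <;> unfold Mker <;> fun_prop

theorem norm_Mker_le (θ : Theta) (c d p ω : ℝ) : ‖Mker θ c d p ω‖ ≤ max |c| |d| * |ω| ^ p := by
  have hsign : |Real.sign ω| ≤ 1 := by
    rcases Real.sign_apply_eq ω with h | h | h <;> simp [h]
  cases θ <;> simp only [Mker, norm_mul, Complex.norm_real, Complex.norm_I, Real.norm_eq_abs,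
    one_mul, abs_of_nonneg (Real.rpow_nonneg (abs_nonneg ω) p)]
  · gcongr; exact le_max_left _ _
  · calc |d| * |Real.sign ω| * |ω| ^ p ≤ max |c| |d| * 1 * |ω| ^ p := by
          gcongr; exact le_max_right _ _
      _ = _ := by rw [mul_one]

theorem integrableMoments_of_norm_le {g : ℝ → ℂ} (hg : AEStronglyMeasurable g) {C r : ℝ}
    (hC : ∀ ω, ‖g ω‖ ≤ C * (1 + |ω|) ^ (-r)) {N : ℕ} (hN : N + 1 < r) : IntegrableMoments g N := by
  refine ⟨hg, fun n hn ↦ ?_⟩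
  have hC₀ : 0 ≤ C := by simpa using (norm_nonneg _).trans (hC 0)
  have hn' : (n : ℝ) ≤ N := by exact_mod_cast hn
  refine ((integrable_one_add_norm (E := ℝ) (r := r - n) (by simp; linarith)).const_mul C).mono'
    (hg.norm.mul (continuous_abs.pow n).aestronglyMeasurable) (.of_forall fun ω ↦ ?_)
  rw [Real.norm_eq_abs, abs_of_nonneg (by positivity), Real.norm_eq_abs, neg_sub,
    sub_eq_neg_add, Real.rpow_add (by positivity), Real.rpow_natCast, ← mul_assoc]
  gcongr
  · exact hC ω
  · linarith [abs_nonneg ω]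

theorem integrableMoments_FT_mul_Mker {m N : ℕ} {f : ℝ → ℝ} (hf : HypH m f) (θ : Theta)
    (c d : ℝ) {p : ℝ} (hp : 0 ≤ p) (hN : N + 1 + p < m) :
    IntegrableMoments (fun ω ↦ FT f ω * Mker θ c d p ω) N := by
  obtain ⟨A, hA⟩ := norm_FT_le_mul_one_add_rpow_neg hf
  have hA₀ : 0 ≤ A := by simpa using (norm_nonneg _).trans (hA 0)
  have hFT : Continuous (FT f) := continuous_FT (by simpa using hf.2 0 (Nat.zero_le m))
  refine integrableMoments_of_norm_le (C := A * max |c| |d|) (r := m - p)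
    (hFT.aestronglyMeasurable.mul (measurable_Mker θ c d p).aestronglyMeasurable)
    (fun ω ↦ ?_) (by linarith)
  have hω : 0 < 1 + |ω| := by positivity
  calc ‖FT f ω * Mker θ c d p ω‖
      ≤ A * (1 + |ω|) ^ (-(m : ℝ)) * (max |c| |d| * (1 + |ω|) ^ p) := by
        rw [norm_mul]
        gcongr
        · exact hA ω
        · exact (norm_Mker_le θ c d p ω).trans (by gcongr; linarith)
    _ = A * max |c| |d| * (1 + |ω|) ^ (-(m - p)) := by
        rw [neg_sub, sub_eq_neg_add, Real.rpow_add hω]; ring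

theorem Psi_eq_re_dampedFourierIntegral (f : ℝ → ℝ) (θ : Theta) (c d p x σ : ℝ) :
    Psi f θ c d p x σ = (((1 / (2 * Real.pi) : ℝ) : ℂ) *
      dampedFourierIntegral (fun ω ↦ FT f ω * Mker θ c d p ω) gaussFactor 0 x σ).re := by
  simp only [Psi, dampedFourierIntegral, gaussFactor, pow_zero, mul_one]

theorem stmt19_general (l m : ℕ) (p : ℝ) (hp : 0 < p)
    (hmp : p + 1 + 2 * (l : ℝ) < (m : ℝ))
    (f : ℝ → ℝ) (hf : HypH m f)
    (θ : Theta) (c d : ℝ)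
    (k : ℕ) (hk : k + 2 ≤ 2 * l) :
    (∃ K : NNReal, LipschitzWith K (fun q : ℝ × ℝ =>
      ((-(deriv (fun s => iteratedDeriv k (fun y => Psi f θ c d p y s) q.1) q.2),
        iteratedDeriv (k + 1) (fun y => Psi f θ c d p y q.2) q.1) : ℝ × ℝ))) ∧
    ∀ q₀ : ℝ × ℝ, ∃ γ : ℝ → ℝ × ℝ, γ 0 = q₀ ∧ ∀ t : ℝ,
      HasDerivAt γ
        ((-(deriv (fun s => iteratedDeriv k (fun y => Psi f θ c d p y s) (γ t).1) (γ t).2),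
          iteratedDeriv (k + 1) (fun y => Psi f θ c d p y (γ t).2) (γ t).1) : ℝ × ℝ) t := by
  set g := fun ω ↦ FT f ω * Mker θ c d p ω
  set C : ℂ := ((1 / (2 * Real.pi) : ℝ) : ℂ)
  have hk' : (k : ℝ) + 2 ≤ 2 * l := by exact_mod_cast hk
  have hg : IntegrableMoments g (k + 2) :=
    integrableMoments_FT_mul_Mker hf θ c d hp.le (by push_cast; linarith)
  have hx : ∀ j ≤ k + 1, ∀ σ, iteratedDeriv j (fun y ↦ Psi f θ c d p y σ)
      = fun y ↦ (C * dampedFourierIntegral g gaussFactor j y σ).re := fun j hj σ ↦ by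
    simp only [Psi_eq_re_dampedFourierIntegral]
    exact isDampingFactor_gaussFactor.iteratedDeriv_re_dampedFourierIntegral
      (hg.mono (by omega)) C σ
  have hσ : ∀ x σ, deriv (fun s ↦ iteratedDeriv k (fun y ↦ Psi f θ c d p y s) x) σ
      = (C * dampedFourierIntegral g gaussFactorDeriv k x σ).re := fun x σ ↦ by
    simp only [hx k (by omega)]
    exact ((isDampingFactor_gaussFactor.hasDerivAt_dampedFourierIntegral_scale
      isDampingFactor_gaussFactorDeriv hasDerivAt_gaussFactor (hg.mono (by omega)) x σ
      ).re_const_mul C).deriv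
  simp only [hσ, hx (k + 1) le_rfl, ← Complex.neg_re, ← neg_mul]
  have hlip := (isDampingFactor_gaussFactorDeriv.lipschitzWith_dampedFourierIntegral
    hg).re_const_mul (-C) |>.prodMk
    ((isDampingFactor_gaussFactor.lipschitzWith_dampedFourierIntegral hg).re_const_mul C)
  exact ⟨⟨_, hlip⟩, fun q₀ ↦ exists_isIntegralCurve_of_lipschitzWith hlip q₀⟩

/-- Lemma 3.4: the vector field `(-∂^{k+1}Ψ_p^θ/∂x^k∂σ, ∂^{k+1}Ψ_p^θ/∂x^{k+1})` is
globally Lipschitz and complete. -/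
theorem stmt19 (l m : ℕ) (hl : 0 < l) (hm : 0 < m) (p : ℝ) (hp : 0 < p)
    (hmp : p + 1 + 2 * (l : ℝ) < (m : ℝ))
    (f : ℝ → ℝ) (hf : HypH m f)
    (hxf : MeasureTheory.Integrable (fun x : ℝ => x * f x))
    (θ : Theta) (c d : ℝ) (hc : c ≠ 0) (hd : d ≠ 0)
    (hF : ∀ ω : ℝ, FT (Lam θ p) ω =
      Mker θ c d p ω * ((Real.exp (-(ω ^ 2) / 2) : ℝ) : ℂ))
    (k : ℕ) (hk : k + 2 ≤ 2 * l) :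
    (∃ K : NNReal, LipschitzWith K (fun q : ℝ × ℝ =>
      ((-(deriv (fun s => iteratedDeriv k (fun y => Psi f θ c d p y s) q.1) q.2),
        iteratedDeriv (k + 1) (fun y => Psi f θ c d p y q.2) q.1) : ℝ × ℝ))) ∧
    ∀ q₀ : ℝ × ℝ, ∃ γ : ℝ → ℝ × ℝ, γ 0 = q₀ ∧ ∀ t : ℝ,
      HasDerivAt γ
        ((-(deriv (fun s => iteratedDeriv k (fun y => Psi f θ c d p y s) (γ t).1) (γ t).2),
          iteratedDeriv (k + 1) (fun y => Psi f θ c d p y (γ t).2) (γ t).1) : ℝ × ℝ) t :=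
  stmt19_general l m p hp hmp f hf θ c d k hk
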